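/- Let f be a good profile with interface at ξ0 ∈ (0,∞) and define the pressure g(ξ) = (m/(m−1)) f(ξ)^{m−1} on (0,ξ0). Assume g is twice differentiable on (0,ξ0), that the left limit s := lim_{ξ→ξ0⁻} g'(ξ) exists and is finite, and that g(ξ)·g''(ξ) → 0 as ξ → ξ0⁻. Then s² + β ξ0 s + m ξ0^σ = 0; consequently β² ξ0² ≥ 4 m ξ0^σ, that is, ξ0 ≤ ξ_max. -/

import Mathlib

/-!
Where `f > 0` the profile equation is equivalent to the pressure equation
`(m-1) g g'' + g'² - (m-1) α g + β ξ g' + m ξ^σ = 0`. At the interface `f`, hence `g`, vanishes,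
so letting `ξ → ξ0⁻` kills the terms `g g''` and `g`, leaving `s² + β ξ0 s + m ξ0^σ = 0`.
This quadratic in `s` has a real root, so its discriminant `β² ξ0² - 4 m ξ0^σ` is nonnegative,
which unwinds to `ξ0 ≤ ξ_max`.
-/

open Real Set Filter Topology

/-- The threshold `ξ_max = (1/(m(σ-2)²))^{1/(σ-2)}`. -/
noncomputable def xiMax (m σ : ℝ) : ℝ := (1 / (m * (σ - 2) ^ 2)) ^ (1 / (σ - 2))

/-- A good profile with interface at `ξ0` for the equation
`(f^m)'' - α f + β ξ f' + ξ^σ f^{2-m} = 0`, where `α = (σ+2)/((σ-2)(m-1))`,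
`β = 2/(σ-2)` (the case `m + p = 2`, `p = 2 - m`). -/
def IsGoodProfile (m σ ξ0 : ℝ) (f : ℝ → ℝ) : Prop :=
  ContinuousOn f (Ici 0) ∧
  (∀ ξ, 0 ≤ ξ → 0 ≤ f ξ) ∧
  (∀ ξ ∈ Ioo 0 ξ0, 0 < f ξ) ∧
  (∀ ξ, ξ0 ≤ ξ → f ξ = 0) ∧
  (∀ ξ ∈ Ioo 0 ξ0, DifferentiableAt ℝ f ξ) ∧
  ContDiffOn ℝ 1 (fun s => f s ^ m) (Ioi 0) ∧
  deriv (fun s => f s ^ m) ξ0 = 0 ∧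
  (∀ ξ ∈ Ioo 0 ξ0,
    deriv (deriv fun s => f s ^ m) ξ
      - (σ + 2) / ((σ - 2) * (m - 1)) * f ξ
      + 2 / (σ - 2) * ξ * deriv f ξ
      + ξ ^ σ * f ξ ^ (2 - m) = 0) ∧
  ((0 < f 0 ∧ derivWithin f (Ici 0) 0 = 0) ∨
    (f 0 = 0 ∧ derivWithin (fun s => f s ^ m) (Ici 0) 0 = 0))

section Pressure

variable {m : ℝ} {f g : ℝ → ℝ} {U : Set ℝ}

theorem hasDerivAt_pressure (hU : IsOpen U) (hm : m ≠ 1) (hpos : ∀ y ∈ U, 0 < f y)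
    (hdiff : ∀ y ∈ U, DifferentiableAt ℝ f y)
    (hg : EqOn g (fun y => m / (m - 1) * f y ^ (m - 1)) U) {x : ℝ} (hx : x ∈ U) :
    HasDerivAt g (m * f x ^ (m - 2) * deriv f x) x := by
  have hgd := ((hdiff x hx).hasDerivAt.rpow_const (p := m - 1) (Or.inl (hpos x hx).ne')).const_mul
    (m / (m - 1))
  have hm1 : m - 1 ≠ 0 := sub_ne_zero.mpr hm
  refine (hgd.congr_of_eventuallyEq (eventually_of_mem (hU.mem_nhds hx) hg)).congr_deriv ?_
  rw [show m - 1 - 1 = m - 2 by ring]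
  field_simp

theorem deriv_rpow_eq_mul_deriv_pressure (hU : IsOpen U) (hm : m ≠ 1)
    (hpos : ∀ y ∈ U, 0 < f y) (hdiff : ∀ y ∈ U, DifferentiableAt ℝ f y)
    (hg : EqOn g (fun y => m / (m - 1) * f y ^ (m - 1)) U) {x : ℝ} (hx : x ∈ U) :
    deriv (fun s => f s ^ m) x = f x * deriv g x := by
  have hfx := hpos x hx
  rw [((hdiff x hx).hasDerivAt.rpow_const (Or.inl hfx.ne')).deriv,
    (hasDerivAt_pressure hU hm hpos hdiff hg hx).deriv,
    show m - 1 = (m - 2) + 1 by ring, rpow_add hfx, rpow_one]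
  ring

theorem pressure_eq_of_profile_eq (hU : IsOpen U) (hm : m ≠ 1) (hpos : ∀ y ∈ U, 0 < f y)
    (hdiff : ∀ y ∈ U, DifferentiableAt ℝ f y)
    (hg : EqOn g (fun y => m / (m - 1) * f y ^ (m - 1)) U) {a b k ξ : ℝ} (hξ : ξ ∈ U)
    (hg2 : DifferentiableAt ℝ (deriv g) ξ)
    (heqn : deriv (deriv fun s => f s ^ m) ξ - a * f ξ + b * ξ * deriv f ξ
      + k * f ξ ^ (2 - m) = 0) :
    (m - 1) * (g ξ * deriv (deriv g) ξ) + deriv g ξ ^ 2 - (m - 1) * a * g ξ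
      + b * ξ * deriv g ξ + m * k = 0 := by
  have hfξ := hpos ξ hξ
  have hfm'' : deriv (deriv fun s => f s ^ m) ξ
      = deriv f ξ * deriv g ξ + f ξ * deriv (deriv g) ξ := by
    have hev : (deriv fun s => f s ^ m) =ᶠ[𝓝 ξ] fun y => f y * deriv g y :=
      eventually_of_mem (hU.mem_nhds hξ) fun y hy =>
        deriv_rpow_eq_mul_deriv_pressure hU hm hpos hdiff hg hy
    exact hev.deriv_eq.trans ((hdiff ξ hξ).hasDerivAt.mul hg2.hasDerivAt).deriv
  have hg' : deriv g ξ = m * f ξ ^ (m - 2) * deriv f ξ :=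
    (hasDerivAt_pressure hU hm hpos hdiff hg hξ).deriv
  have hmg : (m - 1) * g ξ = m * f ξ ^ (m - 1) := by
    rw [hg hξ]
    field_simp [sub_ne_zero.mpr hm]
  have hpow₁ : f ξ ^ (m - 2) * f ξ = f ξ ^ (m - 1) := by
    rw [show m - 1 = (m - 2) + 1 by ring, rpow_add hfξ, rpow_one]
  have hpow₂ : f ξ ^ (m - 2) * f ξ ^ (2 - m) = 1 := by
    rw [← rpow_add hfξ, show m - 2 + (2 - m) = 0 by ring, rpow_zero]
  rw [hfm''] at heqn
  linear_combination (m * f ξ ^ (m - 2)) * heqn + (deriv g ξ + b * ξ) * hg'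
    + (deriv (deriv g) ξ - a) * hmg + (a * m - m * deriv (deriv g) ξ) * hpow₁ - m * k * hpow₂

end Pressure

theorem tendsto_nhdsLT_zero_of_continuousOn {f : ℝ → ℝ} {ξ0 : ℝ} (hξ0 : 0 < ξ0)
    (hcont : ContinuousOn f (Ici 0)) (hzero : f ξ0 = 0) :
    Tendsto f (𝓝[<] ξ0) (𝓝 0) := by
  have hc : Tendsto f (𝓝[Ici 0] ξ0) (𝓝 0) := hzero ▸ hcont ξ0 hξ0.le
  refine hc.mono_left ?_
  rw [← nhdsWithin_Ioo_eq_nhdsLT hξ0]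
  exact nhdsWithin_mono ξ0 fun y hy => le_of_lt hy.1

theorem tendsto_pressure_nhdsLT_zero {m ξ0 : ℝ} {f g : ℝ → ℝ} (hm : 1 < m) (hξ0 : 0 < ξ0)
    (hcont : ContinuousOn f (Ici 0)) (hzero : f ξ0 = 0)
    (hg : EqOn g (fun y => m / (m - 1) * f y ^ (m - 1)) (Ioo 0 ξ0)) :
    Tendsto g (𝓝[<] ξ0) (𝓝 0) := by
  have hrpow : Tendsto (fun y => f y ^ (m - 1)) (𝓝[<] ξ0) (𝓝 ((0 : ℝ) ^ (m - 1))) :=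
    (continuousAt_rpow_const 0 (m - 1) (Or.inr (by linarith))).tendsto.comp
      (tendsto_nhdsLT_zero_of_continuousOn hξ0 hcont hzero)
  rw [zero_rpow (by linarith)] at hrpow
  simpa using (hrpow.const_mul (m / (m - 1))).congr'
    (eventually_of_mem (Ioo_mem_nhdsLT hξ0) fun y hy => (hg hy).symm)

theorem interface_relation_of_tendsto {g : ℝ → ℝ} {m σ a b s ξ0 : ℝ} (hξ0 : ξ0 ≠ 0)
    (hgl : Tendsto g (𝓝[<] ξ0) (𝓝 0)) (hs : Tendsto (deriv g) (𝓝[<] ξ0) (𝓝 s))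
    (hgg : Tendsto (fun ξ => g ξ * deriv (deriv g) ξ) (𝓝[<] ξ0) (𝓝 0))
    (hode : ∀ᶠ ξ in 𝓝[<] ξ0, (m - 1) * (g ξ * deriv (deriv g) ξ) + deriv g ξ ^ 2
      - (m - 1) * a * g ξ + b * ξ * deriv g ξ + m * ξ ^ σ = 0) :
    s ^ 2 + b * ξ0 * s + m * ξ0 ^ σ = 0 := by
  have hid : Tendsto (fun ξ : ℝ => ξ) (𝓝[<] ξ0) (𝓝 ξ0) :=
    tendsto_nhdsWithin_of_tendsto_nhds tendsto_id
  have hpow : Tendsto (fun ξ : ℝ => ξ ^ σ) (𝓝[<] ξ0) (𝓝 (ξ0 ^ σ)) :=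
    (continuousAt_rpow_const ξ0 σ (Or.inl hξ0)).tendsto.comp hid
  have hlim := ((((hgg.const_mul (m - 1)).add (hs.pow 2)).sub
    (hgl.const_mul ((m - 1) * a))).add ((hid.const_mul b).mul hs)).add (hpow.const_mul m)
  have h := tendsto_nhds_unique hlim (tendsto_const_nhds.congr' (hode.mono fun _ h => h.symm))
  linear_combination h

theorem four_mul_le_sq_of_quadratic_eq_zero {b c s : ℝ} (h : s ^ 2 + b * s + c = 0) :
    4 * c ≤ b ^ 2 := by
  have hsq : b ^ 2 - 4 * c = (2 * s + b) ^ 2 := by linear_combination (-4) * h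
  linarith [sq_nonneg (2 * s + b)]

theorem le_xiMax {m σ ξ : ℝ} (hm : 0 < m) (hσ : 2 < σ) (hξ : 0 < ξ)
    (h : 4 * m * ξ ^ σ ≤ (2 / (σ - 2)) ^ 2 * ξ ^ 2) : ξ ≤ xiMax m σ := by
  have hσ2 : 0 < σ - 2 := by linarith
  have hsplit : ξ ^ σ = ξ ^ (σ - 2) * ξ ^ 2 := by
    rw [← rpow_natCast, ← rpow_add hξ]
    norm_num
  have hbound : ξ ^ (σ - 2) ≤ 1 / (m * (σ - 2) ^ 2) := by
    rw [hsplit, div_pow, div_mul_eq_mul_div, le_div_iff₀ (by positivity)] at h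
    rw [le_div_iff₀ (by positivity)]
    nlinarith [pow_pos hξ 2]
  rw [xiMax, one_div (σ - 2), le_rpow_inv_iff_of_pos hξ.le (by positivity) hσ2]
  exact hbound

theorem pressure_interface_relation_general
    (m σ ξ0 : ℝ) (hm1 : 1 < m) (hσ : 2 < σ) (hξ0 : 0 < ξ0)
    (f : ℝ → ℝ) (hf : IsGoodProfile m σ ξ0 f)
    (g : ℝ → ℝ) (hg : ∀ ξ ∈ Ioo 0 ξ0, g ξ = m / (m - 1) * f ξ ^ (m - 1))
    (hg2 : ∀ ξ ∈ Ioo 0 ξ0, DifferentiableAt ℝ (deriv g) ξ)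
    (s : ℝ) (hs : Tendsto (deriv g) (𝓝[<] ξ0) (𝓝 s))
    (hgg : Tendsto (fun ξ => g ξ * deriv (deriv g) ξ) (𝓝[<] ξ0) (𝓝 0)) :
    s ^ 2 + 2 / (σ - 2) * ξ0 * s + m * ξ0 ^ σ = 0 ∧
    4 * m * ξ0 ^ σ ≤ (2 / (σ - 2)) ^ 2 * ξ0 ^ 2 ∧
    ξ0 ≤ xiMax m σ := by
  obtain ⟨hcont, -, hpos, hzero, hdiff, -, -, heqn, -⟩ := hf
  have hode : ∀ ξ ∈ Ioo 0 ξ0, (m - 1) * (g ξ * deriv (deriv g) ξ) + deriv g ξ ^ 2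
      - (m - 1) * ((σ + 2) / ((σ - 2) * (m - 1))) * g ξ + 2 / (σ - 2) * ξ * deriv g ξ
      + m * ξ ^ σ = 0 := fun ξ hξ =>
    pressure_eq_of_profile_eq isOpen_Ioo hm1.ne' hpos hdiff hg hξ (hg2 ξ hξ) (heqn ξ hξ)
  have hrel := interface_relation_of_tendsto hξ0.ne'
    (tendsto_pressure_nhdsLT_zero hm1 hξ0 hcont (hzero ξ0 le_rfl) hg) hs hgg
    (eventually_of_mem (Ioo_mem_nhdsLT hξ0) hode)
  have hdisc : 4 * m * ξ0 ^ σ ≤ (2 / (σ - 2)) ^ 2 * ξ0 ^ 2 := by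
    linear_combination four_mul_le_sq_of_quadratic_eq_zero hrel
  exact ⟨hrel, hdisc, le_xiMax (by linarith) hσ hξ0 hdisc⟩

/-- the interface relation for the pressure variable
`g = (m/(m-1)) f^{m-1}`: if `g' → s` and `g g'' → 0` at the interface `ξ0⁻`, then
`s² + β ξ0 s + m ξ0^σ = 0`, hence `β² ξ0² ≥ 4 m ξ0^σ`, i.e. `ξ0 ≤ ξ_max`. -/
theorem pressure_interface_relation
    (m σ ξ0 : ℝ) (hm1 : 1 < m) (hm2 : m < 2) (hσ : 2 < σ) (hξ0 : 0 < ξ0)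
    (f : ℝ → ℝ) (hf : IsGoodProfile m σ ξ0 f)
    (g : ℝ → ℝ) (hg : ∀ ξ ∈ Ioo 0 ξ0, g ξ = m / (m - 1) * f ξ ^ (m - 1))
    (hg1 : ∀ ξ ∈ Ioo 0 ξ0, DifferentiableAt ℝ g ξ)
    (hg2 : ∀ ξ ∈ Ioo 0 ξ0, DifferentiableAt ℝ (deriv g) ξ)
    (s : ℝ) (hs : Tendsto (deriv g) (𝓝[<] ξ0) (𝓝 s))
    (hgg : Tendsto (fun ξ => g ξ * deriv (deriv g) ξ) (𝓝[<] ξ0) (𝓝 0)) :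
    s ^ 2 + 2 / (σ - 2) * ξ0 * s + m * ξ0 ^ σ = 0 ∧
    4 * m * ξ0 ^ σ ≤ (2 / (σ - 2)) ^ 2 * ξ0 ^ 2 ∧
    ξ0 ≤ xiMax m σ :=
  pressure_interface_relation_general m σ ξ0 hm1 hσ hξ0 f hf g hg hg2 s hs hgg
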